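/- Let φ be an automorphism of a compact abelian group K = (ℝ/ℤ)² given by φ(x+ℤ, y+ℤ) = (x+y+ℤ, x+2y+ℤ). Then the contraction group C(φ) = {v ∈ K : φⁿ(v) → 0 as n → ∞} equals {(t+ℤ, ((1−√5)/2)t+ℤ) : t ∈ ℝ}, which is a dense subgroup of K. -/

import Mathlib

/-!
Write `φ, ψ = (1 ± √5)/2`. The matrix `[[1,1],[1,2]]` of `catMap` has eigenvalues `ψ² ∈ (0,1)` and
`φ² > 1`, and `y = ψ x` is the eigenline of `ψ²`; its image in the torus is therefore contracted.
Conversely, if `catMapⁿ v → 0`, the small lifts of `catMapⁿ v` to `ℝ²` eventually follow the linear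
map exactly, so the coordinate `y - ψ x` transverse to the line is eventually multiplied by `φ²` at
each step while tending to `0`. Hence it vanishes: some `catMapⁿ v` lies on the line, and so does
`v`, because `catMap` is injective and maps the line onto itself. The line is dense because it
meets `{0} × 𝕋` in the multiples of `ψ` modulo `1`, and `ψ` is irrational.
-/

open Filter Function Set Topology
open scoped goldenRatio

lemma UnitAddCircle.exists_coe_eq_abs_eq_norm (a : UnitAddCircle) :
    ∃ x : ℝ, (x : UnitAddCircle) = a ∧ |x| = ‖a‖ := by
  obtain ⟨y, rfl⟩ := QuotientAddGroup.mk_surjective a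
  refine ⟨y - round y, ?_, UnitAddCircle.norm_eq.symm⟩
  have hround : ((round y : ℝ) : UnitAddCircle) = 0 :=
    (AddCircle.coe_eq_zero_iff 1).2 ⟨round y, zsmul_one _⟩
  rw [AddCircle.coe_sub, hround, sub_zero]

lemma UnitAddCircle.exists_coe_eq_tendsto_zero {ι : Type*} {l : Filter ι} {u : ι → UnitAddCircle}
    (hu : Tendsto u l (𝓝 0)) :
    ∃ x : ι → ℝ, (∀ i, (x i : UnitAddCircle) = u i) ∧ Tendsto x l (𝓝 0) := by
  choose x hx hnorm using fun i ↦ exists_coe_eq_abs_eq_norm (u i)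
  refine ⟨x, hx, tendsto_zero_iff_norm_tendsto_zero.2 ?_⟩
  simpa only [Real.norm_eq_abs, hnorm, norm_zero] using hu.norm

lemma UnitAddCircle.eventually_eq_of_coe_eq {ι : Type*} {l : Filter ι} {x y : ι → ℝ}
    (hxy : ∀ i, (x i : UnitAddCircle) = y i) (h : Tendsto (fun i ↦ x i - y i) l (𝓝 0)) :
    ∀ᶠ i in l, x i = y i := by
  filter_upwards [h.eventually (Metric.ball_mem_nhds 0 one_pos)] with i hi
  obtain ⟨n, hn⟩ := (AddCircle.coe_eq_zero_iff (x := x i - y i) 1).1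
    (by rw [AddCircle.coe_sub, hxy, sub_self])
  rw [dist_zero_right, Real.norm_eq_abs, ← hn, zsmul_one, ← Int.cast_abs] at hi
  have hn0 : n = 0 := Int.abs_lt_one_iff.1 (by exact_mod_cast hi)
  rwa [hn0, zero_smul, eq_comm, sub_eq_zero] at hn

lemma eventually_eq_zero_of_tendsto_zero_of_norm_le_succ {E : Type*} [NormedAddCommGroup E]
    {w : ℕ → E} (hw : Tendsto w atTop (𝓝 0)) (hle : ∀ᶠ n in atTop, ‖w n‖ ≤ ‖w (n + 1)‖) :
    ∀ᶠ n in atTop, w n = 0 := by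
  obtain ⟨N, hN⟩ := eventually_atTop.1 hle
  filter_upwards [eventually_ge_atTop N] with n hn
  have hmono : Monotone fun k ↦ ‖w (k + n)‖ :=
    monotone_nat_of_le_succ fun k ↦ by
      rw [add_right_comm]; exact hN (k + n) (by omega)
  have hlim : Tendsto (fun k ↦ ‖w (k + n)‖) atTop (𝓝 0) := by
    simpa using ((tendsto_add_atTop_iff_nat n).2 hw).norm
  simpa using hmono.ge_of_tendsto hlim 0

section CatMap

variable {G : Type*} [AddCommGroup G]

def catMap (p : G × G) : G × G := (p.1 + p.2, p.1 + p.2 + p.2)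

lemma catMap_injective : Injective (catMap : G × G → G × G) := by
  rintro ⟨a, b⟩ ⟨c, d⟩ h
  simp only [catMap, Prod.mk.injEq] at h
  have hbd : b = d := by simpa [h.1] using h.2
  exact Prod.ext (by simpa [hbd] using h.1) hbd

lemma catMap_prodMap {H : Type*} [AddCommGroup H] (f : G →+ H) (p : G × G) :
    catMap (Prod.map f f p) = Prod.map f f (catMap p) := by
  simp [catMap]

end CatMap

lemma goldenConj_catMap (p : ℝ × ℝ) :
    (catMap p).2 - ψ * (catMap p).1 = φ ^ 2 * (p.2 - ψ * p.1) := by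
  simp only [catMap]
  linear_combination (ψ * p.1 - p.1 - p.2) * Real.goldenConj_sq

lemma catMap_goldenConj (t : ℝ) : catMap (t, ψ * t) = (ψ ^ 2 * t, ψ * (ψ ^ 2 * t)) := by
  simp only [catMap, Prod.mk.injEq]
  constructor
  · linear_combination (-t) * Real.goldenConj_sq
  · linear_combination (-(1 + ψ) * t) * Real.goldenConj_sq

noncomputable def goldenLine : ℝ →+ UnitAddCircle × UnitAddCircle :=
  .prod (QuotientAddGroup.mk' _) ((QuotientAddGroup.mk' _).comp (AddMonoidHom.mulLeft ψ))

lemma goldenLine_apply (t : ℝ) :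
    goldenLine t = ((t : UnitAddCircle), ((ψ * t : ℝ) : UnitAddCircle)) :=
  rfl

lemma continuous_goldenLine : Continuous goldenLine :=
  (AddCircle.continuous_mk' 1).prodMk
    ((AddCircle.continuous_mk' 1).comp (continuous_const.mul continuous_id))

lemma goldenLine_intCast (n : ℤ) : goldenLine n = (0, n • (ψ : UnitAddCircle)) := by
  refine Prod.ext ((AddCircle.coe_eq_zero_iff 1).2 ⟨n, by simp⟩) ?_
  rw [goldenLine_apply, mul_comm, ← zsmul_eq_mul, AddCircle.coe_zsmul]

lemma catMap_goldenLine (t : ℝ) : catMap (goldenLine t) = goldenLine (ψ ^ 2 * t) := by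
  have h := catMap_prodMap (QuotientAddGroup.mk' (AddSubgroup.zmultiples (1 : ℝ))) (t, ψ * t)
  rwa [catMap_goldenConj] at h

lemma catMap_iterate_goldenLine (n : ℕ) (t : ℝ) :
    catMap^[n] (goldenLine t) = goldenLine (ψ ^ (2 * n) * t) := by
  have h : Semiconj goldenLine (ψ ^ 2 * ·) catMap := fun t ↦ (catMap_goldenLine t).symm
  rw [← h.iterate_right n t, mul_left_iterate, pow_mul]

lemma tendsto_catMap_iterate_goldenLine (t : ℝ) :
    Tendsto (fun n ↦ catMap^[n] (goldenLine t)) atTop (𝓝 0) := by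
  have hψ : |ψ ^ 2| < 1 := by
    rw [abs_lt]; constructor <;> nlinarith [Real.goldenConj_neg, Real.neg_one_lt_goldenConj]
  have h := (tendsto_pow_atTop_nhds_zero_of_abs_lt_one hψ).mul_const t
  rw [zero_mul] at h
  simpa only [catMap_iterate_goldenLine, pow_mul, map_zero, comp_def] using
    (continuous_goldenLine.tendsto 0).comp h

lemma mem_range_goldenLine_of_catMap_iterate {v : UnitAddCircle × UnitAddCircle} {n : ℕ}
    (h : catMap^[n] v ∈ range goldenLine) : v ∈ range goldenLine := by
  obtain ⟨t, ht⟩ := h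
  refine ⟨t / ψ ^ (2 * n), (catMap_injective.iterate n) ?_⟩
  rw [catMap_iterate_goldenLine, ← ht, mul_div_cancel₀ _ (pow_ne_zero _ Real.goldenConj_ne_zero)]

lemma dense_range_goldenLine : Dense (range goldenLine) := by
  have hvert : {(0 : UnitAddCircle)} ×ˢ univ ⊆ closure (range goldenLine) := by
    have hdense : DenseRange (· • (ψ : UnitAddCircle) : ℤ → UnitAddCircle) :=
      AddCircle.denseRange_zsmul_coe_iff.2 (by simpa using Real.goldenConj_irrational)
    rw [← hdense.closure_range, ← closure_singleton, ← closure_prod_eq]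
    refine closure_mono ?_
    rintro ⟨x, _⟩ ⟨hx, n, rfl⟩
    obtain rfl : x = 0 := hx
    exact ⟨n, goldenLine_intCast n⟩
  refine dense_iff_closure_eq.2 (eq_univ_of_forall fun p ↦ ?_)
  obtain ⟨r, hr⟩ := QuotientAddGroup.mk_surjective p.1
  have hp : p = goldenLine r + (0, p.2 - ((ψ * r : ℝ) : UnitAddCircle)) := by
    ext <;> simp [goldenLine_apply, hr]
  rw [hp, ← goldenLine.coe_range, ← AddSubgroup.topologicalClosure_coe]
  exact add_mem (subset_closure ⟨r, rfl⟩) (hvert ⟨rfl, mem_univ _⟩)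

lemma mem_range_goldenLine_of_tendsto {v : UnitAddCircle × UnitAddCircle}
    (hv : Tendsto (fun n ↦ catMap^[n] v) atTop (𝓝 0)) : v ∈ range goldenLine := by
  obtain ⟨x, hx, hx0⟩ := UnitAddCircle.exists_coe_eq_tendsto_zero hv.fst_nhds
  obtain ⟨y, hy, hy0⟩ := UnitAddCircle.exists_coe_eq_tendsto_zero hv.snd_nhds
  have hx1 := (tendsto_add_atTop_iff_nat 1).2 hx0
  have hy1 := (tendsto_add_atTop_iff_nat 1).2 hy0
  have hstep : ∀ᶠ n in atTop, catMap (x n, y n) = (x (n + 1), y (n + 1)) := by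
    have hcoe n : catMap ((x n : UnitAddCircle), (y n : UnitAddCircle)) =
        ((x (n + 1) : UnitAddCircle), (y (n + 1) : UnitAddCircle)) := by
      rw [hx, hy, hx, hy, iterate_succ_apply']
    filter_upwards [UnitAddCircle.eventually_eq_of_coe_eq (fun n ↦ congrArg Prod.fst (hcoe n))
        (by simpa using (hx0.add hy0).sub hx1),
      UnitAddCircle.eventually_eq_of_coe_eq (fun n ↦ congrArg Prod.snd (hcoe n))
        (by simpa using ((hx0.add hy0).add hy0).sub hy1)] with n h1 h2
    exact Prod.ext h1 h2
  have hw : Tendsto (fun n ↦ y n - ψ * x n) atTop (𝓝 0) := by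
    simpa using hy0.sub (hx0.const_mul ψ)
  have hle : ∀ᶠ n in atTop, ‖y n - ψ * x n‖ ≤ ‖y (n + 1) - ψ * x (n + 1)‖ := by
    filter_upwards [hstep] with n hn
    have := goldenConj_catMap (x n, y n)
    rw [hn] at this
    rw [this, norm_mul]
    exact le_mul_of_one_le_left (norm_nonneg _) (by
      rw [Real.norm_eq_abs]; exact (one_le_pow₀ Real.one_lt_goldenRatio.le).trans (le_abs_self _))
  obtain ⟨n, hn⟩ := (eventually_eq_zero_of_tendsto_zero_of_norm_le_succ hw hle).exists
  refine mem_range_goldenLine_of_catMap_iterate (n := n) ⟨x n, ?_⟩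
  rw [goldenLine_apply, ← sub_eq_zero.1 hn, hx, hy]

lemma tendsto_catMap_iterate_iff (v : UnitAddCircle × UnitAddCircle) :
    Tendsto (fun n ↦ catMap^[n] v) atTop (𝓝 0) ↔ v ∈ range goldenLine :=
  ⟨mem_range_goldenLine_of_tendsto, by rintro ⟨t, rfl⟩; exact tendsto_catMap_iterate_goldenLine t⟩

/-- For the automorphism `φ(x,y) = (x+y, x+2y)` of the 2-torus `(ℝ/ℤ)²`, the
contraction group `C(φ) = {v : φⁿ(v) → 0}` equals
`{(t, ((1-√5)/2)t) mod ℤ² : t ∈ ℝ}`, which is a dense subgroup of the torus. -/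
theorem torus_contraction_group :
    ({v : AddCircle (1 : ℝ) × AddCircle (1 : ℝ) |
        Filter.Tendsto
          (fun n : ℕ =>
            (fun p : AddCircle (1 : ℝ) × AddCircle (1 : ℝ) =>
              (p.1 + p.2, p.1 + p.2 + p.2))^[n] v)
          Filter.atTop (nhds 0)} =
      {p : AddCircle (1 : ℝ) × AddCircle (1 : ℝ) |
        ∃ t : ℝ, p = ((t : AddCircle (1 : ℝ)),
          (((1 - Real.sqrt 5) / 2 * t : ℝ) : AddCircle (1 : ℝ)))}) ∧
    Dense {p : AddCircle (1 : ℝ) × AddCircle (1 : ℝ) |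
        ∃ t : ℝ, p = ((t : AddCircle (1 : ℝ)),
          (((1 - Real.sqrt 5) / 2 * t : ℝ) : AddCircle (1 : ℝ)))} ∧
    ∃ S : AddSubgroup (AddCircle (1 : ℝ) × AddCircle (1 : ℝ)),
      (S : Set (AddCircle (1 : ℝ) × AddCircle (1 : ℝ))) =
        {p | ∃ t : ℝ, p = ((t : AddCircle (1 : ℝ)),
          (((1 - Real.sqrt 5) / 2 * t : ℝ) : AddCircle (1 : ℝ)))} := by
  have hline : {p : AddCircle (1 : ℝ) × AddCircle (1 : ℝ) | ∃ t : ℝ, p = ((t : AddCircle (1 : ℝ)),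
      (((1 - Real.sqrt 5) / 2 * t : ℝ) : AddCircle (1 : ℝ)))} = range goldenLine :=
    ext fun p ↦ exists_congr fun t ↦ eq_comm
  rw [hline]
  exact ⟨ext fun v ↦ tendsto_catMap_iterate_iff v, dense_range_goldenLine, goldenLine.range,
    goldenLine.coe_range⟩
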